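/- Let B : [0,1] → ℝ be continuous with B(0) = 0, let u, v be B-solutions with u(0) = 0, u(1) = 1, v(0) = 1, v(1) = 0, let α := u'(0)·v(0) − u(0)·v'(0) be the constant Wronskian, assumed nonzero, and let T be the associated Green operator. Then for every Lebesgue integrable f : [0,1] → ℝ and every h ∈ H1: E(Tf, h) = ∫_0^1 f(x)h(x) dx. That is, T is a right inverse of the random Schrödinger operator L in the weak sense ⟨LTf, h⟩ = ⟨f, h⟩. -/

import Mathlib

open MeasureTheory intervalIntegral

/-- `u` is a pathwise (`B`-)solution of the homogeneous equation `-u'' + B'·u = 0`. -/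
def IsBSolution (B u u' : ℝ → ℝ) : Prop :=
  (∀ x ∈ Set.Icc (0:ℝ) 1, HasDerivWithinAt u (u' x) (Set.Icc 0 1) x) ∧
  ContinuousOn u' (Set.Icc 0 1) ∧
  ∀ x ∈ Set.Icc (0:ℝ) 1, u' x = u' 0 + u x * B x - ∫ y in (0:ℝ)..x, u' y * B y

/-- `h` belongs to `H1` with (a.e.) derivative `g`: `h` is absolutely continuous on
`[0,1]` with `h(0) = h(1) = 0`, i.e. `h(x) = ∫_0^x g` for an integrable `g` with
`∫_0^1 g = 0`. -/
def MemH1 (h g : ℝ → ℝ) : Prop :=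
  MeasureTheory.IntegrableOn g (Set.Icc 0 1) ∧
  (∫ t in (0:ℝ)..1, g t) = 0 ∧
  ∀ x ∈ Set.Icc (0:ℝ) 1, h x = ∫ t in (0:ℝ)..x, g t

/-- The pathwise bilinear form `E(f,h)`, the weak meaning of `⟨Lf, h⟩` for
`L = -d²/dx² + B'`; here `f'` and `h'` are the derivatives of `f` and `h`. -/
noncomputable def Eform (B f f' h h' : ℝ → ℝ) : ℝ :=
  (∫ x in (0:ℝ)..1, f' x * h' x) -
    ∫ x in (0:ℝ)..1, (f' x * h x + f x * h' x) * B x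

/-- The Green operator `T` built from the independent solutions `u`, `v` and the
Wronskian `α`: `(Tf)(x) = α⁻¹·(v(x)·∫_0^x u f + u(x)·∫_x^1 v f)`. -/
noncomputable def greenOp (α : ℝ) (u v f : ℝ → ℝ) (x : ℝ) : ℝ :=
  α⁻¹ * (v x * (∫ y in (0:ℝ)..x, u y * f y) + u x * (∫ y in x..(1:ℝ), v y * f y))

/-- The derivative of `Tf`:
`(Tf)'(x) = α⁻¹·(v'(x)·∫_0^x u f + u'(x)·∫_x^1 v f)`. -/
noncomputable def greenOpDeriv (α : ℝ) (u u' v v' f : ℝ → ℝ) (x : ℝ) : ℝ :=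
  α⁻¹ * (v' x * (∫ y in (0:ℝ)..x, u y * f y) + u' x * (∫ y in x..(1:ℝ), v y * f y))


/-!
Write `F = Tf` and `K = F' - F B` for its quasi-derivative. The quasi-derivatives `u' - u B`,
`v' - v B` of the `B`-solutions are primitives of `-u' B`, `-v' B`, so the product rule for
absolutely continuous functions shows that the Wronskian `u' v - u v'` is constant, and that `K`
is a primitive of `-(B F' + f)`: the Wronskian is what turns the `f`-terms of `K'` into `-f`.
Since `E(F, h) = ∫ K h' - ∫ B F' h`, integrating `K h'` by parts against `h ∈ H1`, which vanishes
at both ends, gives `E(F, h) = ∫ f h`.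
-/

open Set

/-- `f` is absolutely continuous on `[a, b]` with a.e. derivative `f'`. -/
def IsPrimitiveOn (f f' : ℝ → ℝ) (a b : ℝ) : Prop :=
  IntegrableOn f' (Icc a b) ∧ ∀ x ∈ Icc a b, f x = f a + ∫ t in a..x, f' t

namespace IsPrimitiveOn

variable {f f' g g' : ℝ → ℝ} {a b c : ℝ}

theorem intervalIntegrable (hf : IsPrimitiveOn f f' a b) (hc : c ∈ Icc a b) :
    IntervalIntegrable f' volume a c :=
  (intervalIntegrable_iff_integrableOn_Icc_of_le hc.1).2
    (hf.1.mono_set (Icc_subset_Icc_right hc.2))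

theorem mono (hf : IsPrimitiveOn f f' a b) (hc : c ∈ Icc a b) : IsPrimitiveOn f f' a c :=
  ⟨hf.1.mono_set (Icc_subset_Icc_right hc.2),
    fun x hx => hf.2 x ⟨hx.1, hx.2.trans hc.2⟩⟩

theorem congr (hf : IsPrimitiveOn f f' a b) (hfg : EqOn f g (Icc a b))
    (hfg' : EqOn f' g' (Icc a b)) : IsPrimitiveOn g g' a b := by
  refine ⟨hf.1.congr_fun hfg' measurableSet_Icc, fun x hx => ?_⟩
  have hax : Icc a x ⊆ Icc a b := Icc_subset_Icc_right hx.2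
  rw [← hfg hx, ← hfg ⟨le_rfl, hx.1.trans hx.2⟩, hf.2 x hx,
    integral_congr (uIcc_of_le hx.1 ▸ hfg'.mono hax)]

theorem continuousOn (hf : IsPrimitiveOn f f' a b) : ContinuousOn f (Icc a b) := by
  rcases le_or_gt a b with hab | hba
  · have hprim := continuousOn_primitive_interval (uIcc_of_le hab ▸ hf.1)
    rw [uIcc_of_le hab] at hprim
    exact (continuousOn_const.add hprim).congr hf.2
  · simp [Icc_eq_empty_of_lt hba]

theorem add (hf : IsPrimitiveOn f f' a b) (hg : IsPrimitiveOn g g' a b) :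
    IsPrimitiveOn (fun x => f x + g x) (fun x => f' x + g' x) a b := by
  refine ⟨hf.1.add hg.1, fun x hx => ?_⟩
  dsimp only
  rw [integral_add (hf.intervalIntegrable hx) (hg.intervalIntegrable hx), hf.2 x hx, hg.2 x hx]
  ring

theorem sub (hf : IsPrimitiveOn f f' a b) (hg : IsPrimitiveOn g g' a b) :
    IsPrimitiveOn (fun x => f x - g x) (fun x => f' x - g' x) a b := by
  refine ⟨hf.1.sub hg.1, fun x hx => ?_⟩
  dsimp only
  rw [integral_sub (hf.intervalIntegrable hx) (hg.intervalIntegrable hx), hf.2 x hx, hg.2 x hx]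
  ring

theorem const_mul (hf : IsPrimitiveOn f f' a b) (r : ℝ) :
    IsPrimitiveOn (fun x => r * f x) (fun x => r * f' x) a b := by
  refine ⟨hf.1.const_mul r, fun x hx => ?_⟩
  dsimp only
  rw [intervalIntegral.integral_const_mul, hf.2 x hx]
  ring

theorem absolutelyContinuousOnInterval (hf : IsPrimitiveOn f f' a b) (hab : a ≤ b) :
    AbsolutelyContinuousOnInterval (fun x => f a + ∫ t in a..x, f' t) a b :=
  (LipschitzWith.const (f a)).lipschitzOnWith.absolutelyContinuousOnInterval.fun_add
    ((hf.intervalIntegrable ⟨hab, le_rfl⟩).absolutelyContinuousOnInterval_intervalIntegral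
      left_mem_uIcc)

theorem integral_deriv_mul_add_mul_deriv (hf : IsPrimitiveOn f f' a b)
    (hg : IsPrimitiveOn g g' a b) (hab : a ≤ b) :
    ∫ x in a..b, (f' x * g x + f x * g' x) = f b * g b - f a * g a := by
  have hb : b ∈ Icc a b := ⟨hab, le_rfl⟩
  have hparts := (hf.absolutelyContinuousOnInterval hab).integral_deriv_mul_eq_sub
    (hg.absolutelyContinuousOnInterval hab)
  simp only [integral_same, add_zero, ← hf.2 b hb, ← hg.2 b hb] at hparts
  rw [← hparts]
  refine integral_congr_ae ?_
  filter_upwards [(hf.intervalIntegrable hb).ae_hasDerivAt_integral,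
    (hg.intervalIntegrable hb).ae_hasDerivAt_integral] with x hf'x hg'x hx
  have hxI : x ∈ uIcc a b := uIoc_subset_uIcc hx
  have hx' : x ∈ Icc a b := uIcc_of_le hab ▸ hxI
  rw [((hf'x hxI a left_mem_uIcc).const_add (f a)).deriv,
    ((hg'x hxI a left_mem_uIcc).const_add (g a)).deriv, ← hf.2 x hx', ← hg.2 x hx']

theorem mul (hf : IsPrimitiveOn f f' a b) (hg : IsPrimitiveOn g g' a b) :
    IsPrimitiveOn (fun x => f x * g x) (fun x => f' x * g x + f x * g' x) a b :=
  ⟨(hf.1.mul_continuousOn hg.continuousOn isCompact_Icc).add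
      (hg.1.continuousOn_mul hf.continuousOn isCompact_Icc),
    fun x hx => by
      rw [(hf.mono hx).integral_deriv_mul_add_mul_deriv (hg.mono hx) hx.1]
      ring⟩

end IsPrimitiveOn

section Primitives

variable {f : ℝ → ℝ} {a b : ℝ}

theorem isPrimitiveOn_integral (hf : IntegrableOn f (Icc a b)) :
    IsPrimitiveOn (fun x => ∫ t in a..x, f t) f a b :=
  ⟨hf, fun x _ => by simp⟩

theorem isPrimitiveOn_integral_left (hf : IntegrableOn f (Icc a b)) :
    IsPrimitiveOn (fun x => ∫ t in x..b, f t) (fun x => -f x) a b := by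
  refine ⟨hf.neg, fun x hx => ?_⟩
  have hprim := isPrimitiveOn_integral hf
  dsimp only
  rw [intervalIntegral.integral_neg, ← sub_eq_add_neg,
    integral_interval_sub_left (hprim.intervalIntegrable ⟨hx.1.trans hx.2, le_rfl⟩)
      (hprim.intervalIntegrable hx)]

end Primitives

theorem MemH1.isPrimitiveOn {h g : ℝ → ℝ} (hh : MemH1 h g) : IsPrimitiveOn h g 0 1 :=
  ⟨hh.1, fun x hx => by rw [hh.2.2 0 ⟨le_rfl, zero_le_one⟩, integral_same, zero_add, hh.2.2 x hx]⟩

theorem MemH1.apply_zero {h g : ℝ → ℝ} (hh : MemH1 h g) : h 0 = 0 := by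
  rw [hh.2.2 0 ⟨le_rfl, zero_le_one⟩, integral_same]

theorem MemH1.apply_one {h g : ℝ → ℝ} (hh : MemH1 h g) : h 1 = 0 := by
  rw [hh.2.2 1 ⟨zero_le_one, le_rfl⟩, hh.2.1]

namespace IsBSolution

variable {B u u' v v' : ℝ → ℝ}

theorem continuousOn (hu : IsBSolution B u u') : ContinuousOn u (Icc 0 1) :=
  fun x hx => (hu.1 x hx).continuousWithinAt

theorem isPrimitiveOn (hu : IsBSolution B u u') : IsPrimitiveOn u u' 0 1 := by
  refine ⟨hu.2.1.integrableOn_Icc, fun x hx => ?_⟩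
  have hsub : Icc 0 x ⊆ Icc (0:ℝ) 1 := Icc_subset_Icc_right hx.2
  rw [integral_eq_sub_of_hasDerivAt_of_le hx.1 (hu.continuousOn.mono hsub)
    (fun y hy => (hu.1 y (Ioo_subset_Icc_self.trans hsub hy)).hasDerivAt
      (Icc_mem_nhds hy.1 (hy.2.trans_le hx.2)))
    ((intervalIntegrable_iff_integrableOn_Icc_of_le hx.1).2
      (hu.2.1.mono hsub).integrableOn_Icc)]
  ring

/-- The quasi-derivative `u' - u B` of a `B`-solution is a primitive of `-u' B`: this is the
pathwise form of `u'' = B' u`. -/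
theorem isPrimitiveOn_quasiDeriv (hB : ContinuousOn B (Icc 0 1)) (hu : IsBSolution B u u') :
    IsPrimitiveOn (fun x => u' x - u x * B x) (fun x => -(u' x * B x)) 0 1 := by
  refine ⟨(hu.2.1.mul hB).neg.integrableOn_Icc, fun x hx => ?_⟩
  have h0 := hu.2.2 0 ⟨le_rfl, zero_le_one⟩
  have hx := hu.2.2 x hx
  rw [integral_same] at h0
  rw [intervalIntegral.integral_neg]
  linarith

theorem wronskian_eq (hB : ContinuousOn B (Icc 0 1)) (hu : IsBSolution B u u')
    (hv : IsBSolution B v v') :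
    ∀ x ∈ Icc (0:ℝ) 1, u' x * v x - u x * v' x = u' 0 * v 0 - u 0 * v' 0 := by
  have hW := ((hu.isPrimitiveOn_quasiDeriv hB).mul hv.isPrimitiveOn).sub
    (hu.isPrimitiveOn.mul (hv.isPrimitiveOn_quasiDeriv hB))
  intro x hx
  -- `u' v - u v' = (u' - u B) v - u (v' - v B)`, and the `B`-terms of its derivative cancel.
  have hWx := hW.2 x hx
  rw [integral_congr (g := fun _ => 0) (fun t _ => by ring), intervalIntegral.integral_zero] at hWx
  linear_combination hWx

end IsBSolution

theorem eform_eq_integral_mul {B F F' f h g : ℝ → ℝ} (hB : ContinuousOn B (Icc 0 1))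
    (hF : ContinuousOn F (Icc 0 1)) (hF' : ContinuousOn F' (Icc 0 1))
    (hf : IntegrableOn f (Icc 0 1))
    (hK : IsPrimitiveOn (fun x => F' x - F x * B x) (fun x => -(B x * F' x + f x)) 0 1)
    (hh : MemH1 h g) :
    Eform B F F' h g = ∫ x in (0:ℝ)..1, f x * h x := by
  have hparts := hK.integral_deriv_mul_add_mul_deriv hh.isPrimitiveOn zero_le_one
  rw [hh.apply_zero, hh.apply_one, mul_zero, mul_zero, sub_zero] at hparts
  have hhc := hh.isPrimitiveOn.continuousOn
  have hint : ∀ {φ : ℝ → ℝ}, IntegrableOn φ (Icc 0 1) → IntervalIntegrable φ volume 0 1 :=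
    (intervalIntegrable_iff_integrableOn_Icc_of_le zero_le_one).2
  have hF'g := hint (hh.1.continuousOn_mul hF' isCompact_Icc)
  have hFhB : IntervalIntegrable (fun x => (F' x * h x + F x * g x) * B x) volume 0 1 :=
    hint (((hF'.mul hhc).integrableOn_Icc.add
      (hh.1.continuousOn_mul hF isCompact_Icc)).mul_continuousOn hB isCompact_Icc)
  have hfh := hint (hf.mul_continuousOn hhc isCompact_Icc)
  rw [Eform, ← sub_eq_zero, ← integral_sub hF'g hFhB, ← integral_sub (hF'g.sub hFhB) hfh]
  exact (integral_congr fun x _ => by ring).trans hparts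

section Green

variable {B u u' v v' f : ℝ → ℝ} {α : ℝ}

theorem continuousOn_greenOp (hu : IsBSolution B u u') (hv : IsBSolution B v v')
    (hf : IntegrableOn f (Icc 0 1)) : ContinuousOn (greenOp α u v f) (Icc 0 1) :=
  continuousOn_const.mul <|
    (hv.continuousOn.mul
      (isPrimitiveOn_integral (hf.continuousOn_mul hu.continuousOn isCompact_Icc)).continuousOn).add
    (hu.continuousOn.mul
      (isPrimitiveOn_integral_left (hf.continuousOn_mul hv.continuousOn isCompact_Icc)).continuousOn)

theorem continuousOn_greenOpDeriv (hu : IsBSolution B u u') (hv : IsBSolution B v v')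
    (hf : IntegrableOn f (Icc 0 1)) : ContinuousOn (greenOpDeriv α u u' v v' f) (Icc 0 1) :=
  continuousOn_const.mul <|
    (hv.2.1.mul
      (isPrimitiveOn_integral (hf.continuousOn_mul hu.continuousOn isCompact_Icc)).continuousOn).add
    (hu.2.1.mul
      (isPrimitiveOn_integral_left (hf.continuousOn_mul hv.continuousOn isCompact_Icc)).continuousOn)

theorem isPrimitiveOn_greenOpDeriv_sub_greenOp_mul (hB : ContinuousOn B (Icc 0 1))
    (hu : IsBSolution B u u') (hv : IsBSolution B v v')
    (hW : ∀ x ∈ Icc (0:ℝ) 1, u' x * v x - u x * v' x = α) (hα : α ≠ 0)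
    (hf : IntegrableOn f (Icc 0 1)) :
    IsPrimitiveOn (fun x => greenOpDeriv α u u' v v' f x - greenOp α u v f x * B x)
      (fun x => -(B x * greenOpDeriv α u u' v v' f x + f x)) 0 1 := by
  have hP := isPrimitiveOn_integral (hf.continuousOn_mul hu.continuousOn isCompact_Icc)
  have hQ := isPrimitiveOn_integral_left (hf.continuousOn_mul hv.continuousOn isCompact_Icc)
  -- `F' - F B = α⁻¹ ((v' - v B) P + (u' - u B) Q)`
  refine ((((hv.isPrimitiveOn_quasiDeriv hB).mul hP).add
    ((hu.isPrimitiveOn_quasiDeriv hB).mul hQ)).const_mul α⁻¹).congr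
    (fun x _ => by simp only [greenOp, greenOpDeriv]; ring) (fun x hx => ?_)
  simp only [greenOpDeriv]
  linear_combination (-f x * α⁻¹) * hW x hx - f x * inv_mul_cancel₀ hα

end Green

theorem green_right_inverse_general (B u u' v v' : ℝ → ℝ)
    (hB : ContinuousOn B (Set.Icc 0 1))
    (hu : IsBSolution B u u') (hv : IsBSolution B v v')
    (α : ℝ) (hαdef : α = u' 0 * v 0 - u 0 * v' 0) (hα : α ≠ 0)
    (f : ℝ → ℝ) (hf : MeasureTheory.IntegrableOn f (Set.Icc 0 1))
    (h g : ℝ → ℝ) (hh : MemH1 h g) :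
    Eform B (greenOp α u v f) (greenOpDeriv α u u' v v' f) h g
      = ∫ x in (0:ℝ)..1, f x * h x := by
  have hW : ∀ x ∈ Icc (0:ℝ) 1, u' x * v x - u x * v' x = α :=
    hαdef ▸ hu.wronskian_eq hB hv
  exact eform_eq_integral_mul hB (continuousOn_greenOp hu hv hf)
    (continuousOn_greenOpDeriv hu hv hf)
    hf (isPrimitiveOn_greenOpDeriv_sub_greenOp_mul hB hu hv hW hα hf) hh

/-- The Green operator is a right inverse of the random Schrödinger operator in the
weak sense: `⟨LTf, h⟩ = ⟨f, h⟩`, i.e. `E(Tf, h) = ∫_0^1 f h` for every integrable `f`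
and every `h ∈ H1`. -/
theorem green_right_inverse (B u u' v v' : ℝ → ℝ)
    (hB : ContinuousOn B (Set.Icc 0 1)) (hB0 : B 0 = 0)
    (hu : IsBSolution B u u') (hv : IsBSolution B v v')
    (hu0 : u 0 = 0) (hu1 : u 1 = 1) (hv0 : v 0 = 1) (hv1 : v 1 = 0)
    (α : ℝ) (hαdef : α = u' 0 * v 0 - u 0 * v' 0) (hα : α ≠ 0)
    (f : ℝ → ℝ) (hf : MeasureTheory.IntegrableOn f (Set.Icc 0 1))
    (h g : ℝ → ℝ) (hh : MemH1 h g) :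
    Eform B (greenOp α u v f) (greenOpDeriv α u u' v v' f) h g
      = ∫ x in (0:ℝ)..1, f x * h x :=
  green_right_inverse_general B u u' v v' hB hu hv α hαdef hα f hf h g hh
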